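/- Let F be a field and let α, β be positive integers with α ≤ β < 2α. For each ordered pair (i, j) with i, j ∈ {1,…,α} and i > j (when i, j ≤ 2α − β), with i > 2α − β ≥ j, or with i > j and i, j > 2α − β, fix coefficients θ ∈ F \ {0, 1} (one coefficient θ_{i,j} for each coupled position in regions A and B₂, and two coefficients θ_{i,2j−2α+β−1}, θ_{i,2j−2α+β} for each pair of coupled sets in region C). Define the F-linear map T on the space of α × β matrices over F sending b = (b_{i,j}) to b' = (b'_{i,j}) by: (A-region, i, j ≤ 2α−β) b'_{i,j} = b_{i,j} + b_{j,i} if i < j, b'_{i,j} = b_{i,j} if i = j, b'_{i,j} = b_{i,j} + θ_{i,j}·b_{j,i} if i > j; (B₁-region, i ≤ 2α−β < j ≤ α) b'_{i,2j−2α+β−1} = b_{i,2j−2α+β−1} + b_{j,i} and b'_{i,2j−2α+β} = b_{i,2j−2α+β}; (B₂-region, j ≤ 2α−β < i ≤ α) b'_{i,j} = b_{i,j} + θ_{i,j}·(b_{j,2i−2α+β−1} + b_{j,2i−2α+β}); (C-region, i, j > 2α−β) b'_{i,2j−2α+β−1} = b_{i,2j−2α+β−1} + b_{j,2i−2α+β−1}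 and b'_{i,2j−2α+β} = b_{i,2j−2α+β} + b_{j,2i−2α+β} if i < j, the entries are unchanged if i = j, and b'_{i,2j−2α+β−1} = b_{i,2j−2α+β−1} + θ_{i,2j−2α+β−1}·b_{j,2i−2α+β−1}, b'_{i,2j−2α+β} = b_{i,2j−2α+β} + θ_{i,2j−2α+β}·b_{j,2i−2α+β} if i > j. Then T is a bijection (an F-linear automorphism of the space of α × β matrices over F). -/
import Mathlib


/-- Extension of an `α × β` matrix to 1-based natural-number indices (zero outside). -/
def matExt {F : Type*} [Field F] {α β : ℕ} (b : Matrix (Fin α) (Fin β) F)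
    (i j : ℕ) : F :=
  if h : 1 ≤ i ∧ i ≤ α ∧ 1 ≤ j ∧ j ≤ β then
    b ⟨i - 1, by omega⟩ ⟨j - 1, by omega⟩
  else 0

/-- The set transformation `T` on `α × β` arrays (`α ≤ β < 2α`) with coupling
coefficients `θ i c` (indexed by row `i` and column `c`, both 1-based): entries in the
sub-arrays A, B₁, B₂ and C are updated by pairwise combination of coupled sets as in
step three of the set transformation. -/
def setTransform {F : Type*} [Field F] (α β : ℕ) (θ : ℕ → ℕ → F)
    (b : Matrix (Fin α) (Fin β) F) : Matrix (Fin α) (Fin β) F :=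
  fun r s =>
    let i : ℕ := (r : ℕ) + 1
    let c : ℕ := (s : ℕ) + 1
    if i ≤ 2 * α - β then
      if c ≤ 2 * α - β then
        -- A-region (set `R_{i,c}` with `i, c ≤ 2α − β`)
        if i < c then matExt b i c + matExt b c i
        else if i = c then matExt b i c
        else matExt b i c + θ i c * matExt b c i
      else
        -- B₁-region: column `c` belongs to set `R_{i,j}` with `j > 2α − β`
        let j : ℕ := (c - (2 * α - β) + 1) / 2 + (2 * α - β)
        if (c - (2 * α - β)) % 2 = 1 then
          -- first symbol of the pair: `b'_{i,2j−2α+β−1} = b_{i,2j−2α+β−1} + b_{j,i}`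
          matExt b i c + matExt b j i
        else
          -- second symbol of the pair is unchanged
          matExt b i c
    else
      if c ≤ 2 * α - β then
        -- B₂-region: `b'_{i,c} = b_{i,c} + θ_{i,c}·(b_{c,2i−2α+β−1} + b_{c,2i−2α+β})`
        matExt b i c +
          θ i c * (matExt b c (2 * i + β - 2 * α - 1) + matExt b c (2 * i + β - 2 * α))
      else
        -- C-region
        let j : ℕ := (c - (2 * α - β) + 1) / 2 + (2 * α - β)
        let c' : ℕ :=
          if (c - (2 * α - β)) % 2 = 1 then 2 * i + β - 2 * α - 1
          else 2 * i + β - 2 * α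
        if i < j then matExt b i c + matExt b j c'
        else if i = j then matExt b i c
        else matExt b i c + θ i c * matExt b j c'

lemma matExt_add {F : Type*} [Field F] {α β : ℕ} (x y : Matrix (Fin α) (Fin β) F) (i j : ℕ) :
    matExt (x + y) i j = matExt x i j + matExt y i j := by
  unfold matExt; split_ifs <;> simp [Matrix.add_apply]

lemma matExt_smul {F : Type*} [Field F] {α β : ℕ} (c : F) (x : Matrix (Fin α) (Fin β) F) (i j : ℕ) :
    matExt (c • x) i j = c * matExt x i j := by
  unfold matExt; split_ifs <;> simp [Matrix.smul_apply]

lemma stf_apply {F : Type*} [Field F] {α β : ℕ} (θ : ℕ → ℕ → F) (b : Matrix (Fin α) (Fin β) F)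
    (i c : ℕ) (h1 : 1 ≤ i) (h2 : i ≤ α) (h3 : 1 ≤ c) (h4 : c ≤ β) :
    setTransform α β θ b ⟨i - 1, by omega⟩ ⟨c - 1, by omega⟩ =
    (if i ≤ 2 * α - β then
      if c ≤ 2 * α - β then
        if i < c then matExt b i c + matExt b c i
        else if i = c then matExt b i c
        else matExt b i c + θ i c * matExt b c i
      else
        if (c - (2 * α - β)) % 2 = 1 then
          matExt b i c + matExt b ((c - (2 * α - β) + 1) / 2 + (2 * α - β)) i
        else matExt b i c
    else
      if c ≤ 2 * α - β then
        matExt b i c +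
          θ i c * (matExt b c (2 * i + β - 2 * α - 1) + matExt b c (2 * i + β - 2 * α))
      else
        if i < (c - (2 * α - β) + 1) / 2 + (2 * α - β) then
          matExt b i c + matExt b ((c - (2 * α - β) + 1) / 2 + (2 * α - β))
            (if (c - (2 * α - β)) % 2 = 1 then 2 * i + β - 2 * α - 1 else 2 * i + β - 2 * α)
        else if i = (c - (2 * α - β) + 1) / 2 + (2 * α - β) then matExt b i c
        else matExt b i c + θ i c * matExt b ((c - (2 * α - β) + 1) / 2 + (2 * α - β))
            (if (c - (2 * α - β)) % 2 = 1 then 2 * i + β - 2 * α - 1 else 2 * i + β - 2 * α)) := by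
  simp only [setTransform]
  rw [Nat.sub_add_cancel h1, Nat.sub_add_cancel h3]
lemma stf_ker {F : Type*} [Field F] {α β : ℕ}
    (hα : 0 < α) (hαβ : α ≤ β) (hβα : β < 2 * α)
    (θ : ℕ → ℕ → F) (hθ1 : ∀ i c, θ i c ≠ 1)
    (b : Matrix (Fin α) (Fin β) F) (hb : setTransform α β θ b = 0) : b = 0 := by
  have hz : ∀ i c, 1 ≤ i → i ≤ α → 1 ≤ c → c ≤ β →
    (if i ≤ 2 * α - β then
      if c ≤ 2 * α - β then
        if i < c then matExt b i c + matExt b c i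
        else if i = c then matExt b i c
        else matExt b i c + θ i c * matExt b c i
      else
        if (c - (2 * α - β)) % 2 = 1 then
          matExt b i c + matExt b ((c - (2 * α - β) + 1) / 2 + (2 * α - β)) i
        else matExt b i c
    else
      if c ≤ 2 * α - β then
        matExt b i c +
          θ i c * (matExt b c (2 * i + β - 2 * α - 1) + matExt b c (2 * i + β - 2 * α))
      else
        if i < (c - (2 * α - β) + 1) / 2 + (2 * α - β) then
          matExt b i c + matExt b ((c - (2 * α - β) + 1) / 2 + (2 * α - β))
            (if (c - (2 * α - β)) % 2 = 1 then 2 * i + β - 2 * α - 1 else 2 * i + β - 2 * α)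
        else if i = (c - (2 * α - β) + 1) / 2 + (2 * α - β) then matExt b i c
        else matExt b i c + θ i c * matExt b ((c - (2 * α - β) + 1) / 2 + (2 * α - β))
            (if (c - (2 * α - β)) % 2 = 1 then 2 * i + β - 2 * α - 1 else 2 * i + β - 2 * α)) = 0 := by
    intro i c h1 h2 h3 h4
    rw [← stf_apply θ b i c h1 h2 h3 h4, hb, Matrix.zero_apply]
  have claim : ∀ i c, matExt b i c = 0 := by
    intro i c
    by_cases hin : 1 ≤ i ∧ i ≤ α ∧ 1 ≤ c ∧ c ≤ β
    · obtain ⟨h1, h2, h3, h4⟩ := hin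
      by_cases hik : i ≤ 2 * α - β
      · by_cases hck : c ≤ 2 * α - β
        · -- A region
          rcases lt_trichotomy i c with h | h | h
          · have e1 := hz i c h1 h2 h3 h4
            rw [if_pos hik, if_pos hck, if_pos h] at e1
            have e2 := hz c i h3 (by omega) h1 (by omega)
            rw [if_pos hck, if_pos hik, if_neg (by omega), if_neg (by omega)] at e2
            have hne : (1 : F) - θ c i ≠ 0 := sub_ne_zero_of_ne (Ne.symm (hθ1 c i))
            have h0 : (1 - θ c i) * matExt b i c = 0 := by linear_combination e1 - e2
            exact (mul_eq_zero.mp h0).resolve_left hne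
          · have e := hz i c h1 h2 h3 h4
            rw [if_pos hik, if_pos hck, if_neg (by omega), if_pos h] at e
            exact e
          · have e1 := hz c i h3 (by omega) h1 (by omega)
            rw [if_pos hck, if_pos hik, if_pos h] at e1
            have e2 := hz i c h1 h2 h3 h4
            rw [if_pos hik, if_pos hck, if_neg (by omega), if_neg (by omega)] at e2
            have hne : (1 : F) - θ i c ≠ 0 := sub_ne_zero_of_ne (Ne.symm (hθ1 i c))
            have h0 : (1 - θ i c) * matExt b i c = 0 := by
              linear_combination e2 - θ i c * e1
            exact (mul_eq_zero.mp h0).resolve_left hne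
        · -- B₁ region: i ≤ 2α−β < c
          set j := (c - (2 * α - β) + 1) / 2 + (2 * α - β) with hj
          have e1 := hz i (2 * j - (2 * α - β) - 1) h1 h2 (by omega) (by omega)
          rw [if_pos hik, if_neg (by omega), if_pos (by omega)] at e1
          rw [show (2 * j - (2 * α - β) - 1 - (2 * α - β) + 1) / 2 + (2 * α - β) = j from
            by omega] at e1
          have e2 := hz i (2 * j - (2 * α - β)) h1 h2 (by omega) (by omega)
          rw [if_pos hik, if_neg (by omega), if_neg (by omega)] at e2
          have e3 := hz j i (by omega) (by omega) h1 (by omega)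
          rw [if_neg (by omega), if_pos hik] at e3
          rw [show 2 * j + β - 2 * α - 1 = 2 * j - (2 * α - β) - 1 from by omega,
            show 2 * j + β - 2 * α = 2 * j - (2 * α - β) from by omega] at e3
          have hne : (1 : F) - θ j i ≠ 0 := sub_ne_zero_of_ne (Ne.symm (hθ1 j i))
          have hy : matExt b j i = 0 := by
            have h0 : (1 - θ j i) * matExt b j i = 0 := by
              linear_combination e3 - θ j i * e1 - θ j i * e2
            exact (mul_eq_zero.mp h0).resolve_left hne
          by_cases hpar : (c - (2 * α - β)) % 2 = 1
          · rw [show c = 2 * j - (2 * α - β) - 1 from by omega]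
            linear_combination e1 - hy
          · rw [show c = 2 * j - (2 * α - β) from by omega]
            exact e2
      · by_cases hck : c ≤ 2 * α - β
        · -- B₂ region: c ≤ 2α−β < i
          have e1 := hz c (2 * i - (2 * α - β) - 1) h3 (by omega) (by omega) (by omega)
          rw [if_pos hck, if_neg (by omega), if_pos (by omega)] at e1
          rw [show (2 * i - (2 * α - β) - 1 - (2 * α - β) + 1) / 2 + (2 * α - β) = i from
            by omega] at e1
          have e2 := hz c (2 * i - (2 * α - β)) h3 (by omega) (by omega) (by omega)
          rw [if_pos hck, if_neg (by omega), if_neg (by omega)] at e2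
          have e3 := hz i c h1 h2 h3 h4
          rw [if_neg hik, if_pos hck] at e3
          rw [show 2 * i + β - 2 * α - 1 = 2 * i - (2 * α - β) - 1 from by omega,
            show 2 * i + β - 2 * α = 2 * i - (2 * α - β) from by omega] at e3
          have hne : (1 : F) - θ i c ≠ 0 := sub_ne_zero_of_ne (Ne.symm (hθ1 i c))
          have h0 : (1 - θ i c) * matExt b i c = 0 := by
            linear_combination e3 - θ i c * e1 - θ i c * e2
          exact (mul_eq_zero.mp h0).resolve_left hne
        · -- C region
          set j := (c - (2 * α - β) + 1) / 2 + (2 * α - β) with hj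
          rcases lt_trichotomy i j with h | h | h
          · by_cases hpar : (c - (2 * α - β)) % 2 = 1
            · have hc' : c = 2 * j - (2 * α - β) - 1 := by omega
              have e1 := hz i c h1 h2 h3 h4
              rw [if_neg hik, if_neg hck, ← hj, if_pos h, if_pos hpar,
                show 2 * i + β - 2 * α - 1 = 2 * i - (2 * α - β) - 1 from by omega] at e1
              have e2 := hz j (2 * i - (2 * α - β) - 1) (by omega) (by omega)
                (by omega) (by omega)
              rw [if_neg (by omega), if_neg (by omega),
                show (2 * i - (2 * α - β) - 1 - (2 * α - β) + 1) / 2 + (2 * α - β) = i from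
                  by omega,
                if_neg (by omega), if_neg (by omega), if_pos (by omega : (2 * i - (2 * α - β) - 1 - (2 * α - β)) % 2 = 1),
                show 2 * j + β - 2 * α - 1 = c from by omega] at e2
              have hne : (1 : F) - θ j (2 * i - (2 * α - β) - 1) ≠ 0 :=
                sub_ne_zero_of_ne (Ne.symm (hθ1 _ _))
              have h0 : (1 - θ j (2 * i - (2 * α - β) - 1)) * matExt b i c = 0 := by
                linear_combination e1 - e2
              exact (mul_eq_zero.mp h0).resolve_left hne
            · have hc' : c = 2 * j - (2 * α - β) := by omega
              have e1 := hz i c h1 h2 h3 h4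
              rw [if_neg hik, if_neg hck, ← hj, if_pos h, if_neg hpar,
                show 2 * i + β - 2 * α = 2 * i - (2 * α - β) from by omega] at e1
              have e2 := hz j (2 * i - (2 * α - β)) (by omega) (by omega)
                (by omega) (by omega)
              rw [if_neg (by omega), if_neg (by omega),
                show (2 * i - (2 * α - β) - (2 * α - β) + 1) / 2 + (2 * α - β) = i from
                  by omega,
                if_neg (by omega), if_neg (by omega),
                if_neg (by omega : ¬ (2 * i - (2 * α - β) - (2 * α - β)) % 2 = 1),
                show 2 * j + β - 2 * α = c from by omega] at e2
              have hne : (1 : F) - θ j (2 * i - (2 * α - β)) ≠ 0 :=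
                sub_ne_zero_of_ne (Ne.symm (hθ1 _ _))
              have h0 : (1 - θ j (2 * i - (2 * α - β))) * matExt b i c = 0 := by
                linear_combination e1 - e2
              exact (mul_eq_zero.mp h0).resolve_left hne
          · have e := hz i c h1 h2 h3 h4
            rw [if_neg hik, if_neg hck, ← hj, if_neg (by omega), if_pos h] at e
            exact e
          · by_cases hpar : (c - (2 * α - β)) % 2 = 1
            · have hc' : c = 2 * j - (2 * α - β) - 1 := by omega
              have e1 := hz j (2 * i - (2 * α - β) - 1) (by omega) (by omega)
                (by omega) (by omega)
              rw [if_neg (by omega), if_neg (by omega),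
                show (2 * i - (2 * α - β) - 1 - (2 * α - β) + 1) / 2 + (2 * α - β) = i from
                  by omega,
                if_pos h, if_pos (by omega : (2 * i - (2 * α - β) - 1 - (2 * α - β)) % 2 = 1),
                show 2 * j + β - 2 * α - 1 = c from by omega] at e1
              have e2 := hz i c h1 h2 h3 h4
              rw [if_neg hik, if_neg hck, ← hj, if_neg (by omega), if_neg (by omega),
                if_pos hpar,
                show 2 * i + β - 2 * α - 1 = 2 * i - (2 * α - β) - 1 from by omega] at e2
              have hne : (1 : F) - θ i c ≠ 0 := sub_ne_zero_of_ne (Ne.symm (hθ1 i c))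
              have h0 : (1 - θ i c) * matExt b i c = 0 := by
                linear_combination e2 - θ i c * e1
              exact (mul_eq_zero.mp h0).resolve_left hne
            · have hc' : c = 2 * j - (2 * α - β) := by omega
              have e1 := hz j (2 * i - (2 * α - β)) (by omega) (by omega)
                (by omega) (by omega)
              rw [if_neg (by omega), if_neg (by omega),
                show (2 * i - (2 * α - β) - (2 * α - β) + 1) / 2 + (2 * α - β) = i from
                  by omega,
                if_pos h, if_neg (by omega : ¬ (2 * i - (2 * α - β) - (2 * α - β)) % 2 = 1),
                show 2 * j + β - 2 * α = c from by omega] at e1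
              have e2 := hz i c h1 h2 h3 h4
              rw [if_neg hik, if_neg hck, ← hj, if_neg (by omega), if_neg (by omega),
                if_neg hpar,
                show 2 * i + β - 2 * α = 2 * i - (2 * α - β) from by omega] at e2
              have hne : (1 : F) - θ i c ≠ 0 := sub_ne_zero_of_ne (Ne.symm (hθ1 i c))
              have h0 : (1 - θ i c) * matExt b i c = 0 := by
                linear_combination e2 - θ i c * e1
              exact (mul_eq_zero.mp h0).resolve_left hne
    · unfold matExt
      rw [dif_neg hin]
  funext r s
  have hr := r.isLt
  have hs := s.isLt
  have hm := claim ((r : ℕ) + 1) ((s : ℕ) + 1)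
  unfold matExt at hm
  rw [dif_pos ⟨by omega, by omega, by omega, by omega⟩] at hm
  simpa using hm

/-- The set transformation on `α × β` arrays with `α ≤ β < 2α` and all coupling
coefficients in `F \ {0, 1}` is an `F`-linear automorphism of the space of `α × β`
matrices over `F`: it is linear and bijective. -/
theorem setTransform_linear_bijective (F : Type*) [Field F] (α β : ℕ)
    (hα : 0 < α) (hαβ : α ≤ β) (hβα : β < 2 * α)
    (θ : ℕ → ℕ → F) (hθ0 : ∀ i c, θ i c ≠ 0) (hθ1 : ∀ i c, θ i c ≠ 1) :
    IsLinearMap F (setTransform (F := F) α β θ) ∧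
      Function.Bijective (setTransform (F := F) α β θ) := by
  have hlin : IsLinearMap F (setTransform (F := F) α β θ) := by
    constructor
    · intro x y
      funext r s
      simp only [setTransform, Matrix.add_apply, matExt_add]
      split_ifs <;> ring
    · intro c x
      funext r s
      simp only [setTransform, Matrix.smul_apply, matExt_smul, smul_eq_mul]
      split_ifs <;> ring
  refine ⟨hlin, ?_⟩
  let L : Matrix (Fin α) (Fin β) F →ₗ[F] Matrix (Fin α) (Fin β) F :=
    IsLinearMap.mk' _ hlin
  have hL : ⇑L = setTransform (F := F) α β θ := rfl
  have hinj : Function.Injective L := by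
    rw [injective_iff_map_eq_zero]
    intro b hb0
    exact stf_ker hα hαβ hβα θ hθ1 b (by rw [← hL]; exact hb0)
  have hsurj : Function.Surjective L := LinearMap.injective_iff_surjective.mp hinj
  rw [← hL]
  exact ⟨hinj, hsurj⟩
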